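/- arXiv:1709.04642 — 3 statements merged into one kernel-verified Lean document; each statement's English description precedes it below -/
import Mathlib

section
/- Let k ≥ 2, let H₁ and H₂ be finite simple graphs that are each k-connected, with a common vertex v, and let ι be a bijection from the neighbourhood of v in H₁ to the neighbourhood of v in H₂. Then the vertex sum G of H₁ and H₂ over v given ι is k-connected. -/
open SimpleGraph

/-- A finite simple graph is `k`-connected if it has at least `k+1` vertices and removing
any set of fewer than `k` vertices leaves a connected graph. -/
def IsKConnected (k : ℕ) {V : Type*} [Fintype V] (G : SimpleGraph V) : Prop :=
  k + 1 ≤ Fintype.card V ∧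
    ∀ X : Finset V, X.card < k → (G.induce ((↑X : Set V)ᶜ)).Connected

section VertexSum

variable {V₁ V₂ : Type*} (H₁ : SimpleGraph V₁) (H₂ : SimpleGraph V₂) (v₁ : V₁) (v₂ : V₂)
  (ι : (H₁.neighborSet v₁) ≃ (H₂.neighborSet v₂))

/-- The vertex sum of `H₁` and `H₂` over the common vertex `v` (represented by `v₁` in
`H₁` and by `v₂` in `H₂`), given the bijection `ι` between the neighbourhoods of `v`:
the graph on `(V(H₁)∖{v}) ⊔ (V(H₂)∖{v})` with all edges of `H₁` and of `H₂` not at `v`,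
and an edge between `u` and `ι u` for every neighbour `u` of `v` in `H₁`. -/
def vertexSum : SimpleGraph ({x : V₁ // x ≠ v₁} ⊕ {y : V₂ // y ≠ v₂}) where
  Adj a b :=
    match a, b with
    | Sum.inl x, Sum.inl y => H₁.Adj x.val y.val
    | Sum.inr x, Sum.inr y => H₂.Adj x.val y.val
    | Sum.inl x, Sum.inr y => ∃ h : x.val ∈ H₁.neighborSet v₁, (ι ⟨x.val, h⟩ : V₂) = y.val
    | Sum.inr y, Sum.inl x => ∃ h : x.val ∈ H₁.neighborSet v₁, (ι ⟨x.val, h⟩ : V₂) = y.val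
  symm := ⟨by
    rintro (x | x) (y | y) h
    · exact H₁.adj_symm h
    · exact h
    · exact h
    · exact H₂.adj_symm h⟩
  loopless := ⟨by
    rintro (x | x) h
    · exact H₁.ne_of_adj h rfl
    · exact H₂.ne_of_adj h rfl⟩

end VertexSum

/-!
Let `X` be a set of fewer than `k` vertices of the vertex sum, with parts `X₁` in `H₁ - v` and
`X₂` in `H₂ - v`. Since `v` has at least `k` neighbours, some cross edge `u ι(u)` avoids `X`.
If `|X₁| ≤ k - 2`, then `H₁ - v - X₁` is connected and joins every surviving vertex of `H₁` to `u`.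
Otherwise `X₂ = ∅`: a path to `v` in `H₁ - X₁` enters `v` from a neighbour `w`, and the cross edge
at `w` leads into `H₂ - v`, which is connected as `k ≥ 2` and contains `ι(u)`. The vertices of
`H₂` are handled symmetrically, `Sum.swap` identifying the vertex sum with the one over `ι.symm`.
-/

theorem IsKConnected.le_card_neighborSet {V : Type*} [Fintype V] {k : ℕ} {G : SimpleGraph V}
    (h : IsKConnected k G) (v : V) : k ≤ Nat.card (G.neighborSet v) := by
  classical
  by_contra! hlt
  set N := (G.neighborSet v).toFinset
  have hN : N.card < k := by rwa [Set.toFinset_card, ← Nat.card_eq_fintype_card]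
  obtain ⟨w, -, hw⟩ : ∃ w ∈ Finset.univ, w ∉ insert v N :=
    Finset.exists_mem_notMem_of_card_lt_card <|
      (Finset.card_insert_le v N).trans_lt (by rw [Finset.card_univ]; linarith [h.1])
  rw [Finset.mem_insert, not_or] at hw
  have hv : v ∈ (↑N : Set V)ᶜ := by simp [N]
  have hw' : w ∈ (↑N : Set V)ᶜ := by simpa using hw.2
  obtain ⟨z, hz⟩ := ((h.2 N hN).preconnected ⟨v, hv⟩ ⟨w, hw'⟩).nonempty_neighborSet_left
    (by simpa using Ne.symm hw.1)
  exact z.2 (by simpa [N] using hz)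

theorem SimpleGraph.Reachable.exists_adj_reachable_induce_diff_singleton {V : Type*}
    {H : SimpleGraph V} {s : Set V} {a v : V} (ha : a ∈ s \ {v}) (hv : v ∈ s)
    (h : (H.induce s).Reachable ⟨a, ha.1⟩ ⟨v, hv⟩) :
    ∃ w, ∃ hw : w ∈ s \ {v}, H.Adj w v ∧ (H.induce (s \ {v})).Reachable ⟨a, ha⟩ ⟨w, hw⟩ := by
  obtain ⟨p⟩ := h
  suffices ∀ {b c : s} (p : (H.induce s).Walk b c) (hb : (b : V) ∈ s \ {v}), (c : V) = v →
      ∃ w, ∃ hw : w ∈ s \ {v}, H.Adj w v ∧ (H.induce (s \ {v})).Reachable ⟨b, hb⟩ ⟨w, hw⟩ from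
    this p ha rfl
  intro b c p
  induction p with
  | nil => exact fun hb hc => absurd hc hb.2
  | @cons b d c hbd p ih =>
    intro hb hc
    by_cases hd : (d : V) = v
    · exact ⟨b, hb, hd ▸ hbd, .rfl⟩
    · obtain ⟨w, hw, hwv, hdw⟩ := ih ⟨d.2, hd⟩ hc
      have hbd' : (H.induce (s \ {v})).Adj ⟨b, hb⟩ ⟨d, d.2, hd⟩ := hbd
      exact ⟨w, hw, hwv, hbd'.reachable.trans hdw⟩

def SimpleGraph.neighborSetToNe {V : Type*} (G : SimpleGraph V) (v : V) (u : G.neighborSet v) :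
    {x // x ≠ v} :=
  ⟨u, (G.ne_of_adj u.2).symm⟩

namespace vertexSum

variable {V₁ V₂ : Type*} {H₁ : SimpleGraph V₁} {H₂ : SimpleGraph V₂} {v₁ : V₁} {v₂ : V₂}
  {ι : H₁.neighborSet v₁ ≃ H₂.neighborSet v₂}

theorem induce_adj_inl_inr {S : Set ({x : V₁ // x ≠ v₁} ⊕ {y : V₂ // y ≠ v₂})}
    (u : H₁.neighborSet v₁) (hl : .inl (H₁.neighborSetToNe v₁ u) ∈ S)
    (hr : .inr (H₂.neighborSetToNe v₂ (ι u)) ∈ S) :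
    ((vertexSum H₁ H₂ v₁ v₂ ι).induce S).Adj ⟨_, hl⟩ ⟨_, hr⟩ :=
  ⟨u.2, rfl⟩

variable (ι) in
def inlHom (X : Set ({x : V₁ // x ≠ v₁} ⊕ {y : V₂ // y ≠ v₂})) (s : Set V₁)
    (hs : ∀ x ∈ s, ∃ h : x ≠ v₁, .inl ⟨x, h⟩ ∉ X) :
    H₁.induce s →g (vertexSum H₁ H₂ v₁ v₂ ι).induce Xᶜ where
  toFun x := ⟨.inl ⟨x, (hs x x.2).fst⟩, (hs x x.2).snd⟩
  map_rel' h := h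

variable (ι) in
def inrHom (X : Set ({x : V₁ // x ≠ v₁} ⊕ {y : V₂ // y ≠ v₂})) (s : Set V₂)
    (hs : ∀ y ∈ s, ∃ h : y ≠ v₂, .inr ⟨y, h⟩ ∉ X) :
    H₂.induce s →g (vertexSum H₁ H₂ v₁ v₂ ι).induce Xᶜ where
  toFun y := ⟨.inr ⟨y, (hs y y.2).fst⟩, (hs y y.2).snd⟩
  map_rel' h := h

def swapHom : vertexSum H₂ H₁ v₂ v₁ ι.symm →g vertexSum H₁ H₂ v₁ v₂ ι where
  toFun := Sum.swap
  map_rel' := by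
    rintro (a | a) (b | b) h
    · exact h
    · obtain ⟨ha, hab⟩ := h
      exact ⟨hab ▸ (ι.symm ⟨a, ha⟩).2, by simp [← hab]⟩
    · obtain ⟨hb, hba⟩ := h
      exact ⟨hba ▸ (ι.symm ⟨b, hb⟩).2, by simp [← hba]⟩
    · exact h

variable [Fintype V₁] {k : ℕ} {X : Finset ({x : V₁ // x ≠ v₁} ⊕ {y : V₂ // y ≠ v₂})}

theorem exists_inl_notMem_inr_notMem (h₁ : IsKConnected k H₁) (hX : X.card < k) :
    ∃ u : H₁.neighborSet v₁, .inl (H₁.neighborSetToNe v₁ u) ∉ X ∧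
      .inr (H₂.neighborSetToNe v₂ (ι u)) ∉ X := by
  classical
  by_contra! hcover
  let f (u : H₁.neighborSet v₁) : X :=
    if hu : .inl (H₁.neighborSetToNe v₁ u) ∈ X then ⟨_, hu⟩ else ⟨_, hcover u hu⟩
  have hf : Function.Injective f := by
    intro u u' h
    simp only [f] at h
    split_ifs at h <;>
      simp only [SimpleGraph.neighborSetToNe, Subtype.ext_iff, Sum.inl.injEq, Sum.inr.injEq,
        reduceCtorEq] at h
    exacts [Subtype.ext h, ι.injective (Subtype.ext h)]
  have := (h₁.le_card_neighborSet v₁).trans (Nat.card_le_card_of_injective f hf)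
  rw [Nat.card_eq_finsetCard] at this
  omega

theorem reachable_inl_of_card_toLeft_add_one_lt (h₁ : IsKConnected k H₁)
    (hX : X.toLeft.card + 1 < k) {a b : {x : V₁ // x ≠ v₁}} (ha : .inl a ∉ X) (hb : .inl b ∉ X) :
    ((vertexSum H₁ H₂ v₁ v₂ ι).induce (↑X)ᶜ).Reachable ⟨.inl a, ha⟩ ⟨.inl b, hb⟩ := by
  classical
  set A := insert v₁ (X.toLeft.map (Function.Embedding.subtype _))
  have hA : A.card < k := (Finset.card_insert_le _ _).trans_lt (by simpa using hX)
  have hs : ∀ x ∈ (↑A : Set V₁)ᶜ, ∃ h : x ≠ v₁, .inl ⟨x, h⟩ ∉ X := fun x hx =>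
    ⟨fun h => hx (h ▸ Finset.mem_insert_self _ _), fun h =>
      hx (Finset.mem_insert_of_mem (Finset.mem_map_of_mem _ (Finset.mem_toLeft.2 h)))⟩
  exact ((h₁.2 A hA).preconnected ⟨a, by simp [A, a.2, ha]⟩ ⟨b, by simp [A, b.2, hb]⟩).map
    (inlHom ι (↑X) _ hs)

theorem reachable_inl_of_forall_inr_notMem [Fintype V₂] (hk : 2 ≤ k) (h₁ : IsKConnected k H₁)
    (h₂ : IsKConnected k H₂) (hX : X.card < k) (hR : ∀ y, .inr y ∉ X) {u : H₁.neighborSet v₁}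
    (hu : .inl (H₁.neighborSetToNe v₁ u) ∉ X) {a : {x : V₁ // x ≠ v₁}} (ha : .inl a ∉ X) :
    ((vertexSum H₁ H₂ v₁ v₂ ι).induce (↑X)ᶜ).Reachable ⟨.inl a, ha⟩
      ⟨.inl (H₁.neighborSetToNe v₁ u), hu⟩ := by
  classical
  set A := X.toLeft.map (Function.Embedding.subtype _)
  have hA : A.card < k := (Finset.card_map _).trans_lt (X.card_toLeft_le.trans_lt hX)
  have hs : ∀ x ∈ (↑A : Set V₁)ᶜ \ {v₁}, ∃ h : x ≠ v₁, .inl ⟨x, h⟩ ∉ X := fun x hx =>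
    ⟨hx.2, fun h => hx.1 (Finset.mem_map_of_mem _ (Finset.mem_toLeft.2 h))⟩
  have ha' : (a : V₁) ∈ (↑A : Set V₁)ᶜ \ {v₁} := by simp [A, ha, a.2]
  obtain ⟨w, hw, hwv, haw⟩ :=
    ((h₁.2 A hA).preconnected ⟨a, ha'.1⟩ ⟨v₁, by simp [A]⟩)
      |>.exists_adj_reachable_induce_diff_singleton ha'
  have hright : ∀ y y' : {y : V₂ // y ≠ v₂},
      ((vertexSum H₁ H₂ v₁ v₂ ι).induce (↑X)ᶜ).Reachable ⟨.inr y, hR y⟩ ⟨.inr y', hR y'⟩ := by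
    intro y y'
    have hs : ∀ y ∈ (↑({v₂} : Finset V₂) : Set V₂)ᶜ, ∃ h : y ≠ v₂, .inr ⟨y, h⟩ ∉ X :=
      fun y hy => ⟨by simpa using hy, hR _⟩
    exact ((h₂.2 {v₂} (by rw [Finset.card_singleton]; omega)).preconnected ⟨y, by simpa using y.2⟩
      ⟨y', by simpa using y'.2⟩).map (inrHom ι (↑X) _ hs)
  let w' : H₁.neighborSet v₁ := ⟨w, hwv.symm⟩
  exact (haw.map (inlHom ι (↑X) _ hs)).trans <|
    (induce_adj_inl_inr w' (hs w hw).snd (hR _)).reachable.trans <|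
    (hright _ _).trans (induce_adj_inl_inr u hu (hR _)).symm.reachable

theorem reachable_inl [Fintype V₂] (hk : 2 ≤ k) (h₁ : IsKConnected k H₁) (h₂ : IsKConnected k H₂)
    (hX : X.card < k) {u : H₁.neighborSet v₁} (hu : .inl (H₁.neighborSetToNe v₁ u) ∉ X)
    {a : {x : V₁ // x ≠ v₁}} (ha : .inl a ∉ X) :
    ((vertexSum H₁ H₂ v₁ v₂ ι).induce (↑X)ᶜ).Reachable ⟨.inl a, ha⟩
      ⟨.inl (H₁.neighborSetToNe v₁ u), hu⟩ := by
  rcases lt_or_ge (X.toLeft.card + 1) k with hL | hL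
  · exact reachable_inl_of_card_toLeft_add_one_lt h₁ hL ha hu
  · have hR : X.toRight = ∅ := by
      rw [← Finset.card_eq_zero]
      have := X.card_toLeft_add_card_toRight
      omega
    exact reachable_inl_of_forall_inr_notMem hk h₁ h₂ hX
      (fun y hy => by simpa [hR] using Finset.mem_toRight.2 hy) hu ha

theorem reachable_inr [Fintype V₂] (hk : 2 ≤ k) (h₁ : IsKConnected k H₁) (h₂ : IsKConnected k H₂)
    (hX : X.card < k) {u : H₁.neighborSet v₁} (hu : .inr (H₂.neighborSetToNe v₂ (ι u)) ∉ X)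
    {b : {y : V₂ // y ≠ v₂}} (hb : .inr b ∉ X) :
    ((vertexSum H₁ H₂ v₁ v₂ ι).induce (↑X)ᶜ).Reachable ⟨.inr b, hb⟩
      ⟨.inr (H₂.neighborSetToNe v₂ (ι u)), hu⟩ := by
  set X' := X.map (Equiv.sumComm _ _).toEmbedding
  have hX' : ∀ z, z ∈ X' ↔ z.swap ∈ X := by simp [X']
  have hswap := reachable_inl (ι := ι.symm) hk h₂ h₁ (X := X') (by simpa [X'] using hX)
    (u := ι u) (by simpa [hX'] using hu) (a := b) (by simpa [hX'] using hb)
  exact hswap.map (induceHom swapHom fun z hz => mt (hX' z).2 hz)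

end vertexSum

/-- the vertex sum of two `k`-connected graphs (`k ≥ 2`) over a common
vertex is `k`-connected. -/
theorem vertexSum_isKConnected {V₁ V₂ : Type*} [Fintype V₁] [Fintype V₂]
    [DecidableEq V₁] [DecidableEq V₂]
    (H₁ : SimpleGraph V₁) (H₂ : SimpleGraph V₂) (v₁ : V₁) (v₂ : V₂)
    (ι : (H₁.neighborSet v₁) ≃ (H₂.neighborSet v₂))
    (k : ℕ) (hk : 2 ≤ k)
    (h₁ : IsKConnected k H₁) (h₂ : IsKConnected k H₂) :
    IsKConnected k (vertexSum H₁ H₂ v₁ v₂ ι) := by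
  refine ⟨?_, fun X hX => ?_⟩
  · have hcard : Fintype.card ({x : V₁ // x ≠ v₁} ⊕ {y : V₂ // y ≠ v₂}) =
        (Fintype.card V₁ - 1) + (Fintype.card V₂ - 1) := by
      simp [Fintype.card_subtype_compl]
    have := h₁.1
    have := h₂.1
    omega
  obtain ⟨u, hu, hιu⟩ := vertexSum.exists_inl_notMem_inr_notMem (ι := ι) h₁ hX
  refine (connected_iff_exists_forall_reachable _).2 ⟨⟨_, hu⟩, ?_⟩
  rintro ⟨a | b, hab⟩
  · exact (vertexSum.reachable_inl hk h₁ h₂ hX hu hab).symm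
  · exact (vertexSum.induce_adj_inl_inr u hu hιu).reachable.trans
      (vertexSum.reachable_inr hk h₁ h₂ hX hιu hab).symm
end

section
/- Every 3-connected finite simple graph with at most five vertices that admits a planar rotation system is isomorphic to the complete graph K₄, to the 4-wheel W₄, or to K₅ minus one edge. -/
open SimpleGraph

/-- A rotation system of a simple graph: a permutation of the darts mapping each dart to a
dart with the same initial vertex, such that for every vertex the darts with that initial
vertex form a single orbit (or there are none). -/
structure RotationSystem {V : Type*} (G : SimpleGraph V) where
  toPerm : Equiv.Perm G.Dart
  fst_eq : ∀ d : G.Dart, (toPerm d).toProd.1 = d.toProd.1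
  single_orbit : ∀ d d' : G.Dart, d.toProd.1 = d'.toProd.1 → ∃ n : ℕ, (toPerm ^ n) d = d'

/-- The face permutation `d ↦ σ (reversal of d)` of a rotation system. -/
def RotationSystem.facePerm {V : Type*} {G : SimpleGraph V} (ρ : RotationSystem G) :
    Equiv.Perm G.Dart :=
  (Function.Involutive.toPerm SimpleGraph.Dart.symm (fun d => d.symm_symm)).trans ρ.toPerm

/-- Two darts lie on the same face iff they are in the same cycle of the face permutation. -/
def RotationSystem.faceSetoid {V : Type*} {G : SimpleGraph V} (ρ : RotationSystem G) :
    Setoid G.Dart where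
  r := ρ.facePerm.SameCycle
  iseqv := ⟨fun x => Equiv.Perm.SameCycle.refl _ x, fun h => h.symm, fun h h' => h.trans h'⟩

/-- A rotation system is planar if for every connected component containing at least one
edge, its numbers of vertices `V`, edges `E` and faces `F` satisfy `V - E + F = 2`; this is
stated as `2*V + 2*F = D + 4` where `D`, the number of darts in the component, equals `2*E`. -/
def RotationSystem.IsPlanar {V : Type*} {G : SimpleGraph V} (ρ : RotationSystem G) : Prop :=
  ∀ c : G.ConnectedComponent, (∃ d : G.Dart, G.connectedComponentMk d.toProd.1 = c) →
    2 * Nat.card {x : V // G.connectedComponentMk x = c} +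
      2 * Nat.card {q : Quotient ρ.faceSetoid // G.connectedComponentMk q.out.toProd.1 = c} =
      Nat.card {d : G.Dart // G.connectedComponentMk d.toProd.1 = c} + 4

/-- The 4-wheel: a 4-cycle `0 1 2 3` together with the hub `4` adjacent to all of them. -/
def W4 : SimpleGraph (Fin 5) :=
  SimpleGraph.fromRel (fun i j => i = 4 ∨ (i.val < 4 ∧ j.val = (i.val + 1) % 4))

/-- The complete graph on four vertices. -/
def K4 : SimpleGraph (Fin 4) := ⊤

/-- The complete graph on five vertices minus one edge. -/
def K5MinusEdge : SimpleGraph (Fin 5) := (⊤ : SimpleGraph (Fin 5)).deleteEdges {s(0, 1)}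

/-!
Three-connectivity forces minimum degree at least 3, since deleting the neighbours of a vertex
of smaller degree would cut it off from a non-neighbour. On four vertices the graph is therefore
complete. On five vertices the complement has maximum degree at most 1, so it is a matching with
at most two edges: two edges leave `W₄`, one leaves `K₅` minus an edge, and none leaves `K₅`.
The last case is excluded by Euler's formula: when every vertex has two neighbours, no face of a
rotation system has fewer than three darts, so `3F ≤ D` and `V - D/2 + F = 2` give
`D + 12 ≤ 6V`, whereas `K₅` has `D = 20` and `V = 5`.
-/

namespace Equiv.Perm

theorem three_mul_card_quotient_sameCycle_le {α : Type*} [Finite α] (π : Perm α)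
    (h₁ : ∀ x, π x ≠ x) (h₂ : ∀ x, π (π x) ≠ x) :
    3 * Nat.card (Quotient (SameCycle.setoid π)) ≤ Nat.card α := by
  classical
  have := Fintype.ofFinite α
  rw [Nat.card_eq_fintype_card, Nat.card_eq_fintype_card, ← Finset.card_univ,
    ← Finset.card_univ]
  refine Finset.mul_card_image_le_card_of_maps_to (f := Quotient.mk _)
    (fun _ _ => Finset.mem_univ _) 3 fun q _ => ?_
  induction q using Quotient.inductionOn with | h x =>
  have hcycle : {x, π x, π (π x)} ⊆
      ({y | Quotient.mk _ y = Quotient.mk (SameCycle.setoid π) x} : Finset α) := by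
    intro y hy
    simp only [Finset.mem_insert, Finset.mem_singleton] at hy
    simp only [Finset.mem_filter, Finset.mem_univ, true_and, Quotient.eq]
    rcases hy with rfl | rfl | rfl
    · rfl
    · exact (SameCycle.refl π x).apply_left
    · exact (SameCycle.refl π x).apply_left.apply_left
  calc 3 = ({x, π x, π (π x)} : Finset α).card :=
        (Finset.card_eq_three.mpr ⟨_, _, _, (h₁ x).symm, (h₂ x).symm,
          fun h => h₁ x (π.injective h).symm, rfl⟩).symm
    _ ≤ _ := Finset.card_le_card hcycle

end Equiv.Perm

instance SimpleGraph.Dart.finite {V : Type*} {G : SimpleGraph V} [Finite V] : Finite G.Dart :=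
  Finite.of_injective _ Dart.toProd_injective

namespace RotationSystem

variable {V : Type*} {G : SimpleGraph V}

section

variable (ρ : RotationSystem G)

theorem facePerm_fst (d : G.Dart) : (ρ.facePerm d).fst = d.snd :=
  ρ.fst_eq d.symm

theorem facePerm_ne_self (d : G.Dart) : ρ.facePerm d ≠ d := fun h =>
  d.adj.ne (by rw [← ρ.facePerm_fst d, h])

theorem eq_of_toPerm_apply_eq_self {e e' : G.Dart} (he : ρ.toPerm e = e)
    (h : e'.fst = e.fst) : e' = e := by
  obtain ⟨n, hn⟩ := ρ.single_orbit e e' h.symm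
  rw [← hn, Equiv.Perm.pow_apply_eq_self_of_apply_eq_self he]

-- A face `d, ρ.facePerm d` of length two would make `ρ` fix `d.symm`, so that `d.symm` is the
-- only dart leaving `d.snd`.
theorem facePerm_facePerm_ne_self (hdeg : ∀ v, (G.neighborSet v).Nontrivial) (d : G.Dart) :
    ρ.facePerm (ρ.facePerm d) ≠ d := by
  intro h
  have hfix : ρ.toPerm d.symm = d.symm :=
    Dart.ext _ _ (Prod.ext (ρ.facePerm_fst d)
      ((ρ.facePerm_fst (ρ.facePerm d)).symm.trans (congrArg (·.toProd.1) h)))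
  obtain ⟨u, hu, w, hw, huw⟩ := hdeg d.snd
  have hu' := ρ.eq_of_toPerm_apply_eq_self hfix (e' := ⟨(d.snd, u), hu⟩) rfl
  have hw' := ρ.eq_of_toPerm_apply_eq_self hfix (e' := ⟨(d.snd, w), hw⟩) rfl
  exact huw (congrArg (·.toProd.2) (hu'.trans hw'.symm))

theorem three_mul_card_faces_le [Finite V] (hdeg : ∀ v, (G.neighborSet v).Nontrivial) :
    3 * Nat.card (Quotient ρ.faceSetoid) ≤ Nat.card G.Dart :=
  ρ.facePerm.three_mul_card_quotient_sameCycle_le ρ.facePerm_ne_self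
    (ρ.facePerm_facePerm_ne_self hdeg)

end

theorem IsPlanar.euler_formula {ρ : RotationSystem G} (hρ : ρ.IsPlanar) (hG : G.Connected)
    (d : G.Dart) :
    2 * Nat.card V + 2 * Nat.card (Quotient ρ.faceSetoid) = Nat.card G.Dart + 4 := by
  have := hG.preconnected.subsingleton_connectedComponent
  have h := hρ _ ⟨d, rfl⟩
  rwa [Nat.card_congr (Equiv.subtypeUnivEquiv fun _ => Subsingleton.elim _ _),
    Nat.card_congr (Equiv.subtypeUnivEquiv fun _ => Subsingleton.elim _ _),
    Nat.card_congr (Equiv.subtypeUnivEquiv fun _ => Subsingleton.elim _ _)] at h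

theorem IsPlanar.card_dart_add_twelve_le [Finite V] {ρ : RotationSystem G} (hρ : ρ.IsPlanar)
    (hG : G.Connected) (hdeg : ∀ v, (G.neighborSet v).Nontrivial) :
    Nat.card G.Dart + 12 ≤ 6 * Nat.card V := by
  obtain ⟨v⟩ := hG.nonempty
  obtain ⟨w, hw⟩ := (hdeg v).nonempty
  have := hρ.euler_formula hG ⟨(v, w), hw⟩
  have := ρ.three_mul_card_faces_le hdeg
  omega

theorem not_isPlanar_top [Fintype V] (hV : 5 ≤ Fintype.card V)
    (ρ : RotationSystem (⊤ : SimpleGraph V)) : ¬ ρ.IsPlanar := by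
  classical
  intro hρ
  have : Nonempty V := Fintype.card_pos_iff.mp (by omega)
  have hdeg (v : V) : ((⊤ : SimpleGraph V).neighborSet v).Nontrivial := by
    rw [neighborSet_top, ← Set.one_lt_ncard_iff_nontrivial, Set.ncard_compl,
      Set.ncard_singleton, Nat.card_eq_fintype_card]
    omega
  have h := hρ.card_dart_add_twelve_le connected_top hdeg
  simp only [Nat.card_eq_fintype_card, dart_card_eq_sum_degrees, complete_graph_degree,
    Finset.sum_const, Finset.card_univ, smul_eq_mul] at h
  obtain ⟨n, hn⟩ : ∃ n, Fintype.card V = n + 5 := ⟨_, (Nat.sub_add_cancel hV).symm⟩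
  rw [hn, Nat.add_sub_cancel_right (n + 4) 1] at h
  nlinarith

end RotationSystem

theorem IsKConnected.le_degree {V : Type*} [Fintype V] {G : SimpleGraph V} [DecidableRel G.Adj]
    {k : ℕ} (h : IsKConnected k G) (v : V) : k ≤ G.degree v := by
  classical
  by_contra! hlt
  obtain ⟨u, hu⟩ : ∃ u, u ∉ insert v (G.neighborFinset v) := by
    by_contra! hall
    have := (G.degree_eq_card_sub_one v).mpr
      ((G.insert_neighborFinset_eq_univ v).mp (Finset.eq_univ_of_forall hall))
    have := h.1
    omega
  rw [Finset.mem_insert, not_or] at hu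
  have hconn := h.2 (G.neighborFinset v) (by rwa [card_neighborFinset_eq_degree])
  obtain ⟨⟨w, hw⟩, hvw⟩ :=
    (hconn.preconnected ⟨v, by simp⟩ ⟨u, by simpa using hu.2⟩).nonempty_neighborSet_left
      (by simpa using Ne.symm hu.1)
  exact hw (by simpa using hvw)

theorem Function.Injective.exists_equiv_comp_eq {ι V W : Type*} [Finite V] [Finite W]
    {u : ι → V} {w : ι → W} (hu : u.Injective) (hw : w.Injective)
    (h : Nat.card V = Nat.card W) : ∃ f : V ≃ W, ∀ i, f (u i) = w i := by
  obtain ⟨f, hf⟩ := Cardinal.extend_function_finite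
    ((Equiv.ofInjective u hu).symm.toEmbedding.trans ⟨w, hw⟩) (Finite.card_eq.mp h)
  exact ⟨f, fun i => (hf ⟨u i, i, rfl⟩).trans (by simp)⟩

namespace SimpleGraph

def Iso.topDeleteEdges {V W : Type*} (f : V ≃ W) (s : Set (Sym2 V)) :
    (⊤ : SimpleGraph V).deleteEdges s ≃g
      (⊤ : SimpleGraph W).deleteEdges (Sym2.map f '' s) where
  toEquiv := f
  map_rel_iff' {a b} := by
    rw [deleteEdges_adj, deleteEdges_adj, ← Sym2.map_mk,
      (Sym2.map.injective f.injective).mem_set_image]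
    simp

theorem eq_top_deleteEdges_edgeSet_compl {V : Type*} (G : SimpleGraph V) :
    G = (⊤ : SimpleGraph V).deleteEdges Gᶜ.edgeSet := by
  rw [deleteEdges_edgeSet, top_sdiff, compl_compl]

theorem W4_eq_top_deleteEdges :
    W4 = (⊤ : SimpleGraph (Fin 5)).deleteEdges {s(0, 2), s(1, 3)} := by
  ext i j
  simp only [W4, fromRel_adj, deleteEdges_adj, top_adj, Set.mem_insert_iff,
    Set.mem_singleton_iff]
  revert i j
  decide

variable {V : Type*} {G : SimpleGraph V}

theorem eq_of_mem_edgeSet_of_degree_le_one {v : V} [Fintype (G.neighborSet v)]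
    (hv : G.degree v ≤ 1) {e e' : Sym2 V} (he : e ∈ G.edgeSet) (he' : e' ∈ G.edgeSet)
    (hve : v ∈ e) (hve' : v ∈ e') : e = e' := by
  obtain ⟨u, rfl⟩ := Sym2.mem_iff_exists.mp hve
  obtain ⟨w, rfl⟩ := Sym2.mem_iff_exists.mp hve'
  rw [← card_neighborFinset_eq_degree] at hv
  rw [Finset.card_le_one.mp hv u (by simpa using he) w (by simpa using he')]

theorem two_mul_card_edgeFinset_le [Fintype V] [DecidableRel G.Adj]
    (hG : ∀ v, G.degree v ≤ 1) : 2 * G.edgeFinset.card ≤ Fintype.card V := by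
  rw [← sum_degrees_eq_twice_card_edges]
  exact (Finset.sum_le_sum fun v _ => hG v).trans (by simp)

theorem nonempty_iso_K5MinusEdge [Fintype V] (hV : Fintype.card V = 5) {a b : V} (hab : a ≠ b) :
    Nonempty ((⊤ : SimpleGraph V).deleteEdges {s(a, b)} ≃g K5MinusEdge) := by
  obtain ⟨f, hf⟩ := Function.Injective.exists_equiv_comp_eq (u := ![a, b])
    (w := ![(0 : Fin 5), 1]) (by simp [Function.Injective, Fin.forall_fin_succ, hab, hab.symm])
    (by decide) (by simp [hV])
  have hmap : Sym2.map f '' {s(a, b)} = {s(0, 1)} := by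
    have ha : f a = 0 := hf 0
    have hb : f b = 1 := hf 1
    rw [Set.image_singleton, Sym2.map_mk, ha, hb]
  rw [K5MinusEdge, ← hmap]
  exact ⟨Iso.topDeleteEdges f _⟩

theorem nonempty_iso_W4 [Fintype V] (hV : Fintype.card V = 5) {a b c d : V} (hab : a ≠ b)
    (hac : a ≠ c) (had : a ≠ d) (hbc : b ≠ c) (hbd : b ≠ d) (hcd : c ≠ d) :
    Nonempty ((⊤ : SimpleGraph V).deleteEdges {s(a, b), s(c, d)} ≃g W4) := by
  obtain ⟨f, hf⟩ := Function.Injective.exists_equiv_comp_eq (u := ![a, c, b, d])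
    (w := ![(0 : Fin 5), 1, 2, 3])
    (by simp [Function.Injective, Fin.forall_fin_succ, hab, hac, had, hbc, hbd, hcd, hab.symm,
      hac.symm, had.symm, hbc.symm, hbd.symm, hcd.symm]) (by decide) (by simp [hV])
  have hmap : Sym2.map f '' {s(a, b), s(c, d)} = {s(0, 2), s(1, 3)} := by
    have ha : f a = 0 := hf 0
    have hc : f c = 1 := hf 1
    have hb : f b = 2 := hf 2
    have hd : f d = 3 := hf 3
    rw [Set.image_insert_eq, Set.image_singleton, Sym2.map_mk, Sym2.map_mk, ha, hb, hc, hd]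
  rw [W4_eq_top_deleteEdges, ← hmap]
  exact ⟨Iso.topDeleteEdges f _⟩

theorem nonempty_iso_W4_or_K5MinusEdge [Fintype V] [DecidableEq V] [DecidableRel G.Adj]
    (hV : Fintype.card V = 5) (hdeg : ∀ v, 3 ≤ G.degree v) (htop : G ≠ ⊤) :
    Nonempty (G ≃g W4) ∨ Nonempty (G ≃g K5MinusEdge) := by
  have hcompl (v : V) : Gᶜ.degree v ≤ 1 := by
    have := hdeg v
    rw [degree_compl]
    omega
  have hcard := two_mul_card_edgeFinset_le hcompl
  have hpos : 0 < Gᶜ.edgeFinset.card := by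
    rwa [Finset.card_pos, edgeFinset_nonempty, ne_eq, compl_eq_bot]
  rw [eq_top_deleteEdges_edgeSet_compl G, ← coe_edgeFinset]
  obtain h1 | h2 : Gᶜ.edgeFinset.card = 1 ∨ Gᶜ.edgeFinset.card = 2 := by omega
  · obtain ⟨e, he⟩ := Finset.card_eq_one.mp h1
    induction e using Sym2.ind with | h a b =>
    have hab : Gᶜ.Adj a b := by rw [← mem_edgeSet, ← mem_edgeFinset, he]; simp
    rw [he, Finset.coe_singleton]
    exact .inr (nonempty_iso_K5MinusEdge hV hab.ne)
  · obtain ⟨e, e', hee', he⟩ := Finset.card_eq_two.mp h2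
    induction e using Sym2.ind with | h a b =>
    induction e' using Sym2.ind with | h c d =>
    have hab : Gᶜ.Adj a b := by rw [← mem_edgeSet, ← mem_edgeFinset, he]; simp
    have hcd : Gᶜ.Adj c d := by rw [← mem_edgeSet, ← mem_edgeFinset, he]; simp
    have hdisj (v : V) (hv : v ∈ s(a, b)) (hv' : v ∈ s(c, d)) : False :=
      hee' (eq_of_mem_edgeSet_of_degree_le_one (hcompl v) hab hcd hv hv')
    rw [he, Finset.coe_insert, Finset.coe_singleton]
    exact .inl (nonempty_iso_W4 hV hab.ne (fun h => hdisj a (by simp) (by simp [h]))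
      (fun h => hdisj a (by simp) (by simp [h])) (fun h => hdisj b (by simp) (by simp [h]))
      (fun h => hdisj b (by simp) (by simp [h])) hcd.ne)

end SimpleGraph

/-- every 3-connected finite simple graph with at most five vertices that
admits a planar rotation system is isomorphic to `K₄`, to the 4-wheel `W₄`, or to `K₅`
minus an edge. -/
theorem threeConnected_card_le_five_classification {V : Type*} [Fintype V]
    (G : SimpleGraph V) (h3 : IsKConnected 3 G) (hcard : Fintype.card V ≤ 5)
    (hplanar : ∃ ρ : RotationSystem G, ρ.IsPlanar) :
    Nonempty (G ≃g K4) ∨ Nonempty (G ≃g W4) ∨ Nonempty (G ≃g K5MinusEdge) := by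
  classical
  obtain ⟨ρ, hρ⟩ := hplanar
  have hdeg := h3.le_degree
  obtain hV | hV : Fintype.card V = 4 ∨ Fintype.card V = 5 := by
    have := h3.1
    omega
  · have hG : G = ⊤ := eq_top_iff_forall_isUniversal.mpr fun v =>
      (G.degree_eq_card_sub_one v).mp (by
        have := hdeg v
        have := G.degree_lt_card_verts v
        omega)
    subst hG
    exact .inl ⟨Iso.completeGraph (Fintype.equivFinOfCardEq hV)⟩
  · have htop : G ≠ ⊤ := by
      rintro rfl
      exact RotationSystem.not_isPlanar_top hV.ge ρ hρ
    exact .inr (nonempty_iso_W4_or_K5MinusEdge hV hdeg htop)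
end

section
/- Every 3-connected finite simple graph on exactly five vertices contains a spanning subgraph isomorphic to the 4-wheel W₄. -/
/-!
Removing the two vertices outside a set `{v, w, x}` leaves the graph induced on it connected, so
no vertex has two non-neighbours: the non-edges form a matching. Make one non-edge `ab` a diagonal
of the rim; among the other three vertices at most one non-edge remains, so one of them is
adjacent to the other two and serves as the hub, the remaining two forming the other diagonal.
-/

open SimpleGraph

lemma W4.adj_of_rim_of_spokes {V : Type*} {G : SimpleGraph V} {f : Fin 5 → V}
    (h01 : G.Adj (f 0) (f 1)) (h12 : G.Adj (f 1) (f 2)) (h23 : G.Adj (f 2) (f 3))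
    (h30 : G.Adj (f 3) (f 0)) (hspoke : ∀ i, i ≠ 4 → G.Adj (f 4) (f i)) :
    ∀ i j, W4.Adj i j → G.Adj (f i) (f j) := by
  intro i j hij
  fin_cases i <;> fin_cases j <;> simp only [Fin.reduceFinMk, Fin.isValue] at hij ⊢ <;>
    first
      | assumption | exact Adj.symm ‹_›
      | exact hspoke _ (by decide) | exact (hspoke _ (by decide)).symm
      | exact absurd hij (by simp [W4])

namespace SimpleGraph

variable {V : Type*} (G : SimpleGraph V)

def AtMostOneNonNeighbor : Prop :=
  ∀ ⦃v w x : V⦄, Gᶜ.Adj v w → Gᶜ.Adj v x → w = x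

variable {G}

lemma AtMostOneNonNeighbor.adj (hG : G.AtMostOneNonNeighbor) {v w x : V} (hvw : v ≠ w)
    (hnadj : ¬G.Adj v w) (hvx : v ≠ x) (hwx : w ≠ x) : G.Adj v x :=
  by_contra fun h ↦ hwx (hG ⟨hvw, hnadj⟩ ⟨hvx, h⟩)

lemma AtMostOneNonNeighbor.exists_hub (hG : G.AtMostOneNonNeighbor) {c d e : V} (hcd : c ≠ d)
    (hce : c ≠ e) (hde : d ≠ e) :
    G.Adj e c ∧ G.Adj e d ∨ G.Adj d c ∧ G.Adj d e ∨ G.Adj c d ∧ G.Adj c e := by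
  by_cases hcd' : G.Adj c d
  · by_cases hce' : G.Adj c e
    · exact .inr (.inr ⟨hcd', hce'⟩)
    · exact .inr (.inl ⟨hcd'.symm, (hG.adj hce.symm (hce' ∘ .symm) hde.symm hcd).symm⟩)
  · exact .inl ⟨(hG.adj hcd hcd' hce hde).symm, (hG.adj hcd.symm (hcd' ∘ .symm) hde hce).symm⟩

lemma AtMostOneNonNeighbor.exists_spanning_W4_of_not_adj [Fintype V]
    (hG : G.AtMostOneNonNeighbor) (hcard : Fintype.card V = 5) {v₀ v₁ v₂ v₃ v₄ : V}
    (hnodup : [v₀, v₁, v₂, v₃, v₄].Nodup) (h02 : ¬G.Adj v₀ v₂) (h41 : G.Adj v₄ v₁)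
    (h43 : G.Adj v₄ v₃) :
    ∃ f : Fin 5 → V, Function.Bijective f ∧ ∀ i j, W4.Adj i j → G.Adj (f i) (f j) := by
  have hf : Function.Injective ![v₀, v₁, v₂, v₃, v₄] := by
    rw [← List.nodup_ofFn]
    exact hnodup
  simp only [List.nodup_cons, List.mem_cons, List.not_mem_nil, or_false, not_or] at hnodup
  obtain ⟨⟨h01, h02', h03, h04⟩, ⟨h12, -, -⟩, ⟨h23, h24⟩, -, -⟩ := hnodup
  refine ⟨_, (Fintype.bijective_iff_injective_and_card _).2 ⟨hf, by simp [hcard]⟩,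
    W4.adj_of_rim_of_spokes ?_ ?_ ?_ ?_ ?_⟩
  · exact hG.adj h02' h02 h01 (Ne.symm h12)
  · exact (hG.adj (Ne.symm h02') (h02 ∘ .symm) (Ne.symm h12) h01).symm
  · exact hG.adj (Ne.symm h02') (h02 ∘ .symm) h23 h03
  · exact (hG.adj h02' h02 h03 h23).symm
  · intro i hi
    fin_cases i
    · exact (hG.adj h02' h02 h04 h24).symm
    · exact h41
    · exact (hG.adj (Ne.symm h02') (h02 ∘ .symm) h24 h04).symm
    · exact h43
    · exact absurd rfl hi

theorem AtMostOneNonNeighbor.exists_spanning_W4 [Fintype V] (hG : G.AtMostOneNonNeighbor)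
    (hcard : Fintype.card V = 5) :
    ∃ f : Fin 5 → V, Function.Bijective f ∧ ∀ i j, W4.Adj i j → G.Adj (f i) (f j) := by
  classical
  by_cases hcomplete : ∀ a b : V, a ≠ b → G.Adj a b
  · let σ := (Fintype.equivFinOfCardEq hcard).symm
    exact ⟨σ, σ.bijective, fun i j hij ↦ hcomplete _ _ (σ.injective.ne hij.ne)⟩
  push Not at hcomplete
  obtain ⟨a, b, hab, hnadj⟩ := hcomplete
  have hrest : ({a, b}ᶜ : Finset V).card = 3 := by
    rw [Finset.card_compl, hcard, Finset.card_pair hab]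
  obtain ⟨c, d, e, hcd, hce, hde, hcde⟩ := Finset.card_eq_three.1 hrest
  have hout : ∀ y ∈ ({c, d, e} : Finset V), y ≠ a ∧ y ≠ b := by
    intro y hy
    simpa [← hcde, not_or] using hy
  obtain ⟨hca, hcb⟩ := hout c (by simp)
  obtain ⟨hda, hdb⟩ := hout d (by simp)
  obtain ⟨hea, heb⟩ := hout e (by simp)
  rcases hG.exists_hub hcd hce hde with ⟨h₁, h₂⟩ | ⟨h₁, h₂⟩ | ⟨h₁, h₂⟩ <;>
    exact hG.exists_spanning_W4_of_not_adj hcard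
      (by simp [hab, hca, hcb, hda, hdb, hea, heb, hcd, hce, hde, Ne.symm]) hnadj h₁ h₂

end SimpleGraph

lemma IsKConnected.atMostOneNonNeighbor {V : Type*} [Fintype V] {G : SimpleGraph V} {k : ℕ}
    (hG : IsKConnected k G) (hcard : Fintype.card V = k + 2) : G.AtMostOneNonNeighbor := by
  classical
  intro v w x hvw hvx
  by_contra hwx
  set S : Finset V := {v, w, x}
  have hS : S.card = 3 := Finset.card_eq_three.2 ⟨v, w, x, hvw.1, hvx.1, hwx, rfl⟩
  have hSc : Sᶜ.card < k := by
    have := S.card_le_univ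
    rw [Finset.card_compl]
    omega
  have hv : v ∈ ((↑Sᶜ : Set V)ᶜ) := by simp [S]
  have hw : w ∈ ((↑Sᶜ : Set V)ᶜ) := by simp [S]
  have : Nontrivial ((↑Sᶜ : Set V)ᶜ : Set V) :=
    ⟨⟨v, hv⟩, ⟨w, hw⟩, fun h ↦ hvw.1 (congrArg Subtype.val h)⟩
  -- `v` would be isolated in the connected graph induced on `{v, w, x}`
  obtain ⟨⟨u, hu⟩, hvu⟩ := (hG.2 _ hSc).preconnected.exists_adj_of_nontrivial ⟨v, hv⟩
  simp only [comap_adj, Function.Embedding.subtype_apply] at hvu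
  simp only [Finset.coe_compl, compl_compl, Finset.coe_insert, Finset.coe_singleton,
    Set.mem_insert_iff, Set.mem_singleton_iff, S] at hu
  rcases hu with rfl | rfl | rfl
  · exact G.loopless.irrefl u hvu
  · exact hvw.2 hvu
  · exact hvx.2 hvu

/-- every 3-connected finite simple graph on exactly five vertices contains a
spanning subgraph isomorphic to the 4-wheel `W₄`. -/
theorem threeConnected_card_five_spanning_wheel {V : Type*} [Fintype V]
    (G : SimpleGraph V) (h3 : IsKConnected 3 G) (hcard : Fintype.card V = 5) :
    ∃ f : Fin 5 → V, Function.Bijective f ∧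
      ∀ i j : Fin 5, W4.Adj i j → G.Adj (f i) (f j) :=
  (h3.atMostOneNonNeighbor hcard).exists_spanning_W4 hcard
end
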